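/- arXiv:0802.1335 — 3 statements merged into one kernel-verified Lean document; each statement's English description precedes it below -/
import Mathlib

section
/- Let u be an admissible vector field, let θ and η be admissible scalar functions, and let c₁ > 0 be a constant such that |u|²_{L⁴} ≤ c₁ |u| ‖u‖. Write φ = (u,θ) and ‖φ‖² = ‖u‖² + ‖θ‖². Then for every α > 0, |⟨B₂(u,θ),η⟩| ≤ α ‖φ‖² + (3³ c₁² / (4⁴ α³)) |u|² |η|⁴_{L⁴}. -/
open MeasureTheory Real

noncomputable section

/-- The rectangular domain `D = (0,l) × (0,1)` in the plane. -/
def domD (l : ℝ) : Set (ℝ × ℝ) := Set.Ioo 0 l ×ˢ Set.Ioo (0:ℝ) 1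

/-- Partial derivative in the first variable. -/
def pd1 (f : ℝ × ℝ → ℝ) (x : ℝ × ℝ) : ℝ := fderiv ℝ f x (1, 0)

/-- Partial derivative in the second variable. -/
def pd2 (f : ℝ × ℝ → ℝ) (x : ℝ × ℝ) : ℝ := fderiv ℝ f x (0, 1)

/-- A vector field is admissible if it is `C¹`, periodic in `x₁` with period `l`,
vanishes on the lines `x₂ = 0` and `x₂ = 1`, and is divergence free. -/
def AdmissibleVec (l : ℝ) (u : ℝ × ℝ → ℝ × ℝ) : Prop :=
  ContDiff ℝ 1 u ∧
  (∀ x₁ x₂ : ℝ, u (x₁ + l, x₂) = u (x₁, x₂)) ∧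
  (∀ x₁ : ℝ, u (x₁, 0) = 0) ∧
  (∀ x₁ : ℝ, u (x₁, 1) = 0) ∧
  (∀ x : ℝ × ℝ, pd1 (fun y => (u y).1) x + pd2 (fun y => (u y).2) x = 0)

/-- A scalar function is admissible if it is `C¹` and periodic in `x₁` with period `l`. -/
def AdmissibleScalar (l : ℝ) (θ : ℝ × ℝ → ℝ) : Prop :=
  ContDiff ℝ 1 θ ∧ (∀ x₁ x₂ : ℝ, θ (x₁ + l, x₂) = θ (x₁, x₂))

/-- The trilinear form `⟨B₁(u,v),w⟩ = Σ_{i,j} ∫_D u_i (∂_i v_j) w_j dx`. -/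
def B1 (l : ℝ) (u v w : ℝ × ℝ → ℝ × ℝ) : ℝ :=
  ∫ x in domD l,
    ((u x).1 * pd1 (fun y => (v y).1) x * (w x).1
      + (u x).1 * pd1 (fun y => (v y).2) x * (w x).2
      + (u x).2 * pd2 (fun y => (v y).1) x * (w x).1
      + (u x).2 * pd2 (fun y => (v y).2) x * (w x).2)

/-- The trilinear form `⟨B₂(u,θ),η⟩ = Σ_i ∫_D u_i (∂_i θ) η dx`. -/
def B2 (l : ℝ) (u : ℝ × ℝ → ℝ × ℝ) (θ η : ℝ × ℝ → ℝ) : ℝ :=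
  ∫ x in domD l, ((u x).1 * pd1 θ x * η x + (u x).2 * pd2 θ x * η x)

/-- `L²(D)` norm of a vector field. -/
def L2normVec (l : ℝ) (u : ℝ × ℝ → ℝ × ℝ) : ℝ :=
  Real.sqrt (∫ x in domD l, ((u x).1 ^ 2 + (u x).2 ^ 2))

/-- `L²(D)` norm of a scalar function. -/
def L2normScalar (l : ℝ) (f : ℝ × ℝ → ℝ) : ℝ :=
  Real.sqrt (∫ x in domD l, (f x) ^ 2)

/-- `L⁴(D)` norm of a vector field. -/
def L4normVec (l : ℝ) (u : ℝ × ℝ → ℝ × ℝ) : ℝ :=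
  (∫ x in domD l, ((u x).1 ^ 2 + (u x).2 ^ 2) ^ 2) ^ ((1:ℝ)/4)

/-- `L⁴(D)` norm of a scalar function. -/
def L4normScalar (l : ℝ) (f : ℝ × ℝ → ℝ) : ℝ :=
  (∫ x in domD l, (f x) ^ 4) ^ ((1:ℝ)/4)

/-- Gradient (`H¹` seminorm / `V`) norm of a vector field. -/
def H1normVec (l : ℝ) (u : ℝ × ℝ → ℝ × ℝ) : ℝ :=
  Real.sqrt (∫ x in domD l,
    (pd1 (fun y => (u y).1) x ^ 2 + pd2 (fun y => (u y).1) x ^ 2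
      + pd1 (fun y => (u y).2) x ^ 2 + pd2 (fun y => (u y).2) x ^ 2))

/-- Gradient (`H¹` seminorm / `V`) norm of a scalar function. -/
def H1normScalar (l : ℝ) (f : ℝ × ℝ → ℝ) : ℝ :=
  Real.sqrt (∫ x in domD l, (pd1 f x ^ 2 + pd2 f x ^ 2))

lemma young_aux (a b t : ℝ) (ht : 0 < t) : a * b ≤ t * a ^ 2 + (1 / (4 * t)) * b ^ 2 := by
  have h := sq_nonneg (2 * t * a - b)
  have h4 : 0 < 4 * t := by linarith
  rw [← sub_nonneg]
  have : t * a ^ 2 + 1 / (4 * t) * b ^ 2 - a * b = (2 * t * a - b) ^ 2 / (4 * t) := by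
    field_simp; ring
  rw [this]
  positivity

lemma young_abs (a b t : ℝ) (ht : 0 < t) : |a * b| ≤ t * a ^ 2 + (1 / (4 * t)) * b ^ 2 := by
  calc |a * b| = |a| * |b| := abs_mul a b
    _ ≤ t * |a| ^ 2 + (1 / (4 * t)) * |b| ^ 2 := young_aux _ _ t ht
    _ = t * a ^ 2 + (1 / (4 * t)) * b ^ 2 := by rw [sq_abs, sq_abs]

lemma cont_integrableOn_domD {l : ℝ} {f : ℝ × ℝ → ℝ} (hf : Continuous f) :
    IntegrableOn f (domD l) := by
  have hsub : domD l ⊆ Set.Icc ((0 : ℝ), (0 : ℝ)) (l, 1) := by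
    rw [Set.Icc_prod_eq]
    exact Set.prod_mono Set.Ioo_subset_Icc_self Set.Ioo_subset_Icc_self
  exact ((hf.continuousOn).integrableOn_compact isCompact_Icc).mono_set hsub

set_option maxHeartbeats 1000000 in
/-- For admissible `u, θ, η` with the Ladyzhenskaya constant `c₁`, writing `φ = (u,θ)`
and `‖φ‖² = ‖u‖² + ‖θ‖²`, for every `α > 0`:
`|⟨B₂(u,θ),η⟩| ≤ α ‖φ‖² + (3³ c₁² / (4⁴ α³)) |u|² |η|⁴_{L⁴}`. -/
theorem B2_young_estimate (l : ℝ) (hl : 0 < l) (u : ℝ × ℝ → ℝ × ℝ) (θ η : ℝ × ℝ → ℝ)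
    (hu : AdmissibleVec l u)
    (hθ : AdmissibleScalar l θ) (hη : AdmissibleScalar l η)
    (c₁ : ℝ) (hc₁ : 0 < c₁)
    (hL4 : (L4normVec l u) ^ 2 ≤ c₁ * L2normVec l u * H1normVec l u) :
    ∀ α : ℝ, 0 < α →
      |B2 l u θ η| ≤ α * ((H1normVec l u) ^ 2 + (H1normScalar l θ) ^ 2)
        + (27 * c₁ ^ 2 / (256 * α ^ 3)) * (L2normVec l u) ^ 2 * (L4normScalar l η) ^ 4 := by
  intro α hα
  -- continuity facts
  have cu1 : Continuous fun x : ℝ × ℝ => (u x).1 := hu.1.continuous.fst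
  have cu2 : Continuous fun x : ℝ × ℝ => (u x).2 := hu.1.continuous.snd
  have cη : Continuous η := hη.1.continuous
  have cp1 : Continuous (pd1 θ) := by
    unfold pd1
    exact (hθ.1.continuous_fderiv one_ne_zero).clm_apply continuous_const
  have cp2 : Continuous (pd2 θ) := by
    unfold pd2
    exact (hθ.1.continuous_fderiv one_ne_zero).clm_apply continuous_const
  -- integrability facts
  have hintf : IntegrableOn
      (fun x => (u x).1 * pd1 θ x * η x + (u x).2 * pd2 θ x * η x) (domD l) :=
    cont_integrableOn_domD (((cu1.mul cp1).mul cη).add ((cu2.mul cp2).mul cη))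
  have hintp : IntegrableOn (fun x => pd1 θ x ^ 2 + pd2 θ x ^ 2) (domD l) :=
    cont_integrableOn_domD ((cp1.pow 2).add (cp2.pow 2))
  have hintgh : IntegrableOn (fun x => ((u x).1 ^ 2 + (u x).2 ^ 2) * η x ^ 2) (domD l) :=
    cont_integrableOn_domD (((cu1.pow 2).add (cu2.pow 2)).mul (cη.pow 2))
  have hintg2 : IntegrableOn (fun x => ((u x).1 ^ 2 + (u x).2 ^ 2) ^ 2) (domD l) :=
    cont_integrableOn_domD (((cu1.pow 2).add (cu2.pow 2)).pow 2)
  have hinth2 : IntegrableOn (fun x => (η x ^ 2) ^ 2) (domD l) :=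
    cont_integrableOn_domD ((cη.pow 2).pow 2)
  -- Step 1: pointwise Young bound and triangle inequality
  have h1 : |B2 l u θ η| ≤ α * (∫ x in domD l, (pd1 θ x ^ 2 + pd2 θ x ^ 2))
      + (1 / (4 * α)) * ∫ x in domD l, ((u x).1 ^ 2 + (u x).2 ^ 2) * η x ^ 2 := by
    have key : ∀ x : ℝ × ℝ,
        (fun x => |(u x).1 * pd1 θ x * η x + (u x).2 * pd2 θ x * η x|) x
        ≤ (fun x => α * (pd1 θ x ^ 2 + pd2 θ x ^ 2)
            + (1 / (4 * α)) * (((u x).1 ^ 2 + (u x).2 ^ 2) * η x ^ 2)) x := by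
      intro x
      have hy1 := young_abs (pd1 θ x) ((u x).1 * η x) α hα
      have hy2 := young_abs (pd2 θ x) ((u x).2 * η x) α hα
      calc |(u x).1 * pd1 θ x * η x + (u x).2 * pd2 θ x * η x|
          ≤ |(u x).1 * pd1 θ x * η x| + |(u x).2 * pd2 θ x * η x| := abs_add_le _ _
        _ = |pd1 θ x * ((u x).1 * η x)| + |pd2 θ x * ((u x).2 * η x)| := by
            rw [show (u x).1 * pd1 θ x * η x = pd1 θ x * ((u x).1 * η x) by ring,
              show (u x).2 * pd2 θ x * η x = pd2 θ x * ((u x).2 * η x) by ring]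
        _ ≤ (α * pd1 θ x ^ 2 + (1 / (4 * α)) * ((u x).1 * η x) ^ 2)
            + (α * pd2 θ x ^ 2 + (1 / (4 * α)) * ((u x).2 * η x) ^ 2) := add_le_add hy1 hy2
        _ = α * (pd1 θ x ^ 2 + pd2 θ x ^ 2)
            + (1 / (4 * α)) * (((u x).1 ^ 2 + (u x).2 ^ 2) * η x ^ 2) := by ring
    have hmono : (∫ x in domD l, |(u x).1 * pd1 θ x * η x + (u x).2 * pd2 θ x * η x|)
        ≤ ∫ x in domD l, (α * (pd1 θ x ^ 2 + pd2 θ x ^ 2)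
            + (1 / (4 * α)) * (((u x).1 ^ 2 + (u x).2 ^ 2) * η x ^ 2)) :=
      integral_mono hintf.abs ((hintp.const_mul α).add (hintgh.const_mul _)) key
    calc |B2 l u θ η|
        ≤ ∫ x in domD l, |(u x).1 * pd1 θ x * η x + (u x).2 * pd2 θ x * η x| := by
          rw [B2, ← Real.norm_eq_abs]
          exact norm_integral_le_integral_norm _
      _ ≤ ∫ x in domD l, (α * (pd1 θ x ^ 2 + pd2 θ x ^ 2)
            + (1 / (4 * α)) * (((u x).1 ^ 2 + (u x).2 ^ 2) * η x ^ 2)) :=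
          hmono
      _ = α * (∫ x in domD l, (pd1 θ x ^ 2 + pd2 θ x ^ 2))
            + (1 / (4 * α)) * ∫ x in domD l, ((u x).1 ^ 2 + (u x).2 ^ 2) * η x ^ 2 := by
          rw [integral_add (hintp.const_mul α) (hintgh.const_mul _), integral_const_mul,
            integral_const_mul]
  -- identifications of norms
  have hH1θ : (∫ x in domD l, (pd1 θ x ^ 2 + pd2 θ x ^ 2)) = (H1normScalar l θ) ^ 2 := by
    rw [H1normScalar, Real.sq_sqrt (integral_nonneg fun x => by positivity)]
  have hg0 : (0:ℝ) ≤ ∫ x in domD l, ((u x).1 ^ 2 + (u x).2 ^ 2) ^ 2 :=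
    integral_nonneg fun x => by positivity
  have hh0 : (0:ℝ) ≤ ∫ x in domD l, η x ^ 4 := integral_nonneg fun x => by positivity
  -- Cauchy–Schwarz (Hölder with p = q = 2)
  have hmemg : MemLp (fun x => (u x).1 ^ 2 + (u x).2 ^ 2) (ENNReal.ofReal 2)
      (volume.restrict (domD l)) := by
    rw [ENNReal.ofReal_ofNat]
    exact (memLp_two_iff_integrable_sq
      (((cu1.pow 2).add (cu2.pow 2)).aestronglyMeasurable)).2 hintg2
  have hmemh : MemLp (fun x => η x ^ 2) (ENNReal.ofReal 2) (volume.restrict (domD l)) := by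
    rw [ENNReal.ofReal_ofNat]
    exact (memLp_two_iff_integrable_sq ((cη.pow 2).aestronglyMeasurable)).2 hinth2
  have hpq : Real.HolderConjugate 2 2 := Real.holderConjugate_iff.mpr ⟨one_lt_two, by norm_num⟩
  have hholder := integral_mul_le_Lp_mul_Lq_of_nonneg hpq
    (Filter.Eventually.of_forall fun x => by positivity)
    (Filter.Eventually.of_forall fun x => by positivity) hmemg hmemh
  have hrpow : ∀ y : ℝ, y ^ (2:ℝ) = y ^ 2 := fun y => by
    rw [show (2:ℝ) = ((2:ℕ):ℝ) by norm_num, Real.rpow_natCast]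
  simp only [hrpow] at hholder
  have hL4u : (L4normVec l u) ^ 2
      = (∫ x in domD l, ((u x).1 ^ 2 + (u x).2 ^ 2) ^ 2) ^ ((1:ℝ)/2) := by
    rw [L4normVec, ← Real.rpow_natCast (_ ^ ((1:ℝ)/4)) 2, ← Real.rpow_mul hg0]
    norm_num
  have hη4 : (∫ x in domD l, (η x ^ 2) ^ 2) = ∫ x in domD l, η x ^ 4 :=
    integral_congr_ae (Filter.Eventually.of_forall fun x => by ring)
  have hL4η : (L4normScalar l η) ^ 2 = (∫ x in domD l, (η x ^ 2) ^ 2) ^ ((1:ℝ)/2) := by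
    rw [hη4, L4normScalar, ← Real.rpow_natCast (_ ^ ((1:ℝ)/4)) 2, ← Real.rpow_mul hh0]
    norm_num
  have h2 : (∫ x in domD l, ((u x).1 ^ 2 + (u x).2 ^ 2) * η x ^ 2)
      ≤ (L4normVec l u) ^ 2 * (L4normScalar l η) ^ 2 := by
    rw [hL4u, hL4η]
    exact hholder
  -- use the Ladyzhenskaya hypothesis
  have h3 : (∫ x in domD l, ((u x).1 ^ 2 + (u x).2 ^ 2) * η x ^ 2)
      ≤ (c₁ * L2normVec l u * H1normVec l u) * (L4normScalar l η) ^ 2 :=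
    h2.trans (mul_le_mul_of_nonneg_right hL4 (sq_nonneg _))
  have h4 : (1 / (4 * α)) * (∫ x in domD l, ((u x).1 ^ 2 + (u x).2 ^ 2) * η x ^ 2)
      ≤ H1normVec l u * (c₁ * L2normVec l u * (L4normScalar l η) ^ 2 / (4 * α)) := by
    have hk : (0:ℝ) ≤ 1 / (4 * α) := by positivity
    calc (1 / (4 * α)) * (∫ x in domD l, ((u x).1 ^ 2 + (u x).2 ^ 2) * η x ^ 2)
        ≤ (1 / (4 * α)) * ((c₁ * L2normVec l u * H1normVec l u) * (L4normScalar l η) ^ 2) :=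
          mul_le_mul_of_nonneg_left h3 hk
      _ = H1normVec l u * (c₁ * L2normVec l u * (L4normScalar l η) ^ 2 / (4 * α)) := by
          field_simp
  have h5 := young_aux (H1normVec l u)
    (c₁ * L2normVec l u * (L4normScalar l η) ^ 2 / (4 * α)) α hα
  -- final constant comparison
  have hfin : (1 / (4 * α)) * (c₁ * L2normVec l u * (L4normScalar l η) ^ 2 / (4 * α)) ^ 2
      ≤ 27 * c₁ ^ 2 / (256 * α ^ 3) * (L2normVec l u) ^ 2 * (L4normScalar l η) ^ 4 := by
    have hx : (0:ℝ) ≤ c₁ ^ 2 * (L2normVec l u) ^ 2 * (L4normScalar l η) ^ 4 := by positivity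
    have hα3 : (0:ℝ) < α ^ 3 := by positivity
    have hid : (1 / (4 * α)) * (c₁ * L2normVec l u * (L4normScalar l η) ^ 2 / (4 * α)) ^ 2
        = c₁ ^ 2 * (L2normVec l u) ^ 2 * (L4normScalar l η) ^ 4 / (64 * α ^ 3) := by
      field_simp; ring
    have hR : 27 * c₁ ^ 2 / (256 * α ^ 3) * (L2normVec l u) ^ 2 * (L4normScalar l η) ^ 4
        = 27 * (c₁ ^ 2 * (L2normVec l u) ^ 2 * (L4normScalar l η) ^ 4) / (256 * α ^ 3) := by
      ring
    rw [hid, hR, div_le_div_iff₀ (by positivity) (by positivity)]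
    nlinarith [mul_nonneg hx hα3.le]
  -- assemble
  rw [hH1θ] at h1
  have hsplit : α * ((H1normVec l u) ^ 2 + (H1normScalar l θ) ^ 2)
      = α * (H1normVec l u) ^ 2 + α * (H1normScalar l θ) ^ 2 := by ring
  linarith [h1, h4, h5, hfin]
end
end

section
/- Let u, v be admissible vector fields and θ, η admissible scalar functions; set U = u−v, Θ = θ−η, |Φ|² = |U|² + |Θ|², ‖Φ‖² = ‖U‖² + ‖Θ‖², and ‖ψ‖² = ‖v‖² + ‖η‖². Assume c₁ > 0 is a constant such that |U|²_{L⁴} ≤ c₁ |U| ‖U‖ and |Θ|²_{L⁴} ≤ c₁ |Θ| ‖Θ‖. Then there is a constant c > 0 depending only on c₁ (one may take c = 2c₁) such that |⟨B₁(u,u),U⟩ − ⟨B₁(v,v),U⟩ + ⟨B₂(u,θ),Θ⟩ − ⟨B₂(v,η),Θ⟩| ≤ c |Φ| ‖Φ‖ ‖ψ‖. -/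
open MeasureTheory Real

noncomputable section

section Helpers

lemma cont_pd1 {f : ℝ × ℝ → ℝ} (hf : ContDiff ℝ 1 f) : Continuous (pd1 f) :=
  (hf.continuous_fderiv one_ne_zero).clm_apply continuous_const

lemma cont_pd2 {f : ℝ × ℝ → ℝ} (hf : ContDiff ℝ 1 f) : Continuous (pd2 f) :=
  (hf.continuous_fderiv one_ne_zero).clm_apply continuous_const

lemma measD (l : ℝ) : MeasurableSet (domD l) := measurableSet_Ioo.prod measurableSet_Ioo

lemma integrableOn_domD {f : ℝ × ℝ → ℝ} (hf : Continuous f) (l : ℝ) :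
    IntegrableOn f (domD l) := by
  have hsub : domD l ⊆ Set.Icc 0 l ×ˢ Set.Icc (0:ℝ) 1 :=
    Set.prod_mono Set.Ioo_subset_Icc_self Set.Ioo_subset_Icc_self
  have hcomp : IsCompact (Set.Icc (0:ℝ) l ×ˢ Set.Icc (0:ℝ) 1) :=
    isCompact_Icc.prod isCompact_Icc
  exact (hf.continuousOn.integrableOn_compact hcomp).mono_set hsub

lemma hasDerivAt_line1 {f : ℝ × ℝ → ℝ} (hf : ContDiff ℝ 1 f) (x₁ x₂ : ℝ) :
    HasDerivAt (fun t => f (t, x₂)) (pd1 f (x₁, x₂)) x₁ := by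
  have h1 : HasDerivAt (fun t : ℝ => (t, x₂)) ((1:ℝ), (0:ℝ)) x₁ := by
    simpa using ((hasDerivAt_id x₁).prodMk (hasDerivAt_const x₁ x₂))
  have h2 := (hf.differentiable one_ne_zero (x₁, x₂)).hasFDerivAt
  exact h2.comp_hasDerivAt x₁ h1

lemma hasDerivAt_line2 {f : ℝ × ℝ → ℝ} (hf : ContDiff ℝ 1 f) (x₁ x₂ : ℝ) :
    HasDerivAt (fun t => f (x₁, t)) (pd2 f (x₁, x₂)) x₂ := by
  have h1 : HasDerivAt (fun t : ℝ => (x₁, t)) ((0:ℝ), (1:ℝ)) x₂ := by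
    simpa using ((hasDerivAt_const x₂ x₁).prodMk (hasDerivAt_id x₂))
  have h2 := (hf.differentiable one_ne_zero (x₁, x₂)).hasFDerivAt
  exact h2.comp_hasDerivAt x₂ h1

lemma domD_restrict (l : ℝ) :
    (volume : Measure (ℝ × ℝ)).restrict (domD l)
      = ((volume : Measure ℝ).restrict (Set.Ioo 0 l)).prod
          ((volume : Measure ℝ).restrict (Set.Ioo (0:ℝ) 1)) := by
  rw [domD, Measure.volume_eq_prod, Measure.prod_restrict]

lemma integral_pd1_eq_zero {l : ℝ} (hl : 0 < l) {g : ℝ × ℝ → ℝ} (hg : ContDiff ℝ 1 g)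
    (hper : ∀ x₁ x₂ : ℝ, g (x₁ + l, x₂) = g (x₁, x₂)) :
    ∫ x in domD l, pd1 g x = 0 := by
  have hint : Integrable (pd1 g)
      (((volume : Measure ℝ).restrict (Set.Ioo 0 l)).prod
        ((volume : Measure ℝ).restrict (Set.Ioo (0:ℝ) 1))) := by
    rw [← domD_restrict]; exact integrableOn_domD (cont_pd1 hg) l
  rw [domD_restrict, integral_prod_symm _ hint]
  have inner0 : ∀ x₂ : ℝ, ∫ x₁ in Set.Ioo (0:ℝ) l, pd1 g (x₁, x₂) = 0 := by
    intro x₂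
    rw [← integral_Ioc_eq_integral_Ioo, ← intervalIntegral.integral_of_le hl.le]
    have hd : ∀ t ∈ Set.uIcc (0:ℝ) l, HasDerivAt (fun s => g (s, x₂)) (pd1 g (t, x₂)) t :=
      fun t _ => hasDerivAt_line1 hg t x₂
    have hii : IntervalIntegrable (fun t => pd1 g (t, x₂)) volume 0 l :=
      ((cont_pd1 hg).comp (continuous_id.prodMk continuous_const)).intervalIntegrable 0 l
    rw [intervalIntegral.integral_eq_sub_of_hasDerivAt hd hii]
    have := hper 0 x₂; simp at this; rw [this]; ring
  simp [inner0]

lemma integral_pd2_eq_zero {l : ℝ} (hl : 0 < l) {g : ℝ × ℝ → ℝ} (hg : ContDiff ℝ 1 g)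
    (h01 : ∀ x₁ : ℝ, g (x₁, 1) = g (x₁, 0)) :
    ∫ x in domD l, pd2 g x = 0 := by
  have hint : Integrable (pd2 g)
      (((volume : Measure ℝ).restrict (Set.Ioo 0 l)).prod
        ((volume : Measure ℝ).restrict (Set.Ioo (0:ℝ) 1))) := by
    rw [← domD_restrict]; exact integrableOn_domD (cont_pd2 hg) l
  rw [domD_restrict, integral_prod _ hint]
  have inner0 : ∀ x₁ : ℝ, ∫ x₂ in Set.Ioo (0:ℝ) 1, pd2 g (x₁, x₂) = 0 := by
    intro x₁
    rw [← integral_Ioc_eq_integral_Ioo, ← intervalIntegral.integral_of_le (by norm_num : (0:ℝ) ≤ 1)]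
    have hd : ∀ t ∈ Set.uIcc (0:ℝ) 1, HasDerivAt (fun s => g (x₁, s)) (pd2 g (x₁, t)) t :=
      fun t _ => hasDerivAt_line2 hg x₁ t
    have hii : IntervalIntegrable (fun t => pd2 g (x₁, t)) volume 0 1 :=
      ((cont_pd2 hg).comp (continuous_const.prodMk continuous_id)).intervalIntegrable 0 1
    rw [intervalIntegral.integral_eq_sub_of_hasDerivAt hd hii, h01 x₁]; ring
  simp [inner0]

lemma pd1_mul {a b : ℝ × ℝ → ℝ} {x : ℝ × ℝ} (ha : DifferentiableAt ℝ a x)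
    (hb : DifferentiableAt ℝ b x) :
    pd1 (fun y => a y * b y) x = pd1 a x * b x + a x * pd1 b x := by
  simp only [pd1, fderiv_fun_mul ha hb, ContinuousLinearMap.add_apply,
    ContinuousLinearMap.smul_apply, smul_eq_mul]
  ring

lemma pd2_mul {a b : ℝ × ℝ → ℝ} {x : ℝ × ℝ} (ha : DifferentiableAt ℝ a x)
    (hb : DifferentiableAt ℝ b x) :
    pd2 (fun y => a y * b y) x = pd2 a x * b x + a x * pd2 b x := by
  simp only [pd2, fderiv_fun_mul ha hb, ContinuousLinearMap.add_apply,
    ContinuousLinearMap.smul_apply, smul_eq_mul]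
  ring

lemma pd1_sub {a b : ℝ × ℝ → ℝ} {x : ℝ × ℝ} (ha : DifferentiableAt ℝ a x)
    (hb : DifferentiableAt ℝ b x) :
    pd1 (fun y => a y - b y) x = pd1 a x - pd1 b x := by
  simp only [pd1, fderiv_fun_sub ha hb, ContinuousLinearMap.sub_apply]

lemma pd2_sub {a b : ℝ × ℝ → ℝ} {x : ℝ × ℝ} (ha : DifferentiableAt ℝ a x)
    (hb : DifferentiableAt ℝ b x) :
    pd2 (fun y => a y - b y) x = pd2 a x - pd2 b x := by
  simp only [pd2, fderiv_fun_sub ha hb, ContinuousLinearMap.sub_apply]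

lemma skew {l : ℝ} (hl : 0 < l) {u : ℝ × ℝ → ℝ × ℝ} (hu : AdmissibleVec l u)
    {f : ℝ × ℝ → ℝ} (hf : ContDiff ℝ 1 f) (hfper : ∀ x₁ x₂ : ℝ, f (x₁ + l, x₂) = f (x₁, x₂)) :
    ∫ x in domD l, ((u x).1 * pd1 f x * f x + (u x).2 * pd2 f x * f x) = 0 := by
  obtain ⟨huC, huper, hu0, hu1b, hdiv⟩ := hu
  have hu1 : ContDiff ℝ 1 (fun y => (u y).1) := contDiff_fst.comp huC
  have hu2 : ContDiff ℝ 1 (fun y => (u y).2) := contDiff_snd.comp huC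
  set g₁ : ℝ × ℝ → ℝ := fun y => (u y).1 * (f y * f y) with hg₁def
  set g₂ : ℝ × ℝ → ℝ := fun y => (u y).2 * (f y * f y) with hg₂def
  have hg₁ : ContDiff ℝ 1 g₁ := hu1.mul (hf.mul hf)
  have hg₂ : ContDiff ℝ 1 g₂ := hu2.mul (hf.mul hf)
  have hident : ∀ x : ℝ × ℝ,
      (u x).1 * pd1 f x * f x + (u x).2 * pd2 f x * f x
        = (pd1 g₁ x + pd2 g₂ x) / 2 := by
    intro x
    have d1 : DifferentiableAt ℝ (fun y => (u y).1) x := (hu1.differentiable one_ne_zero) x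
    have d2 : DifferentiableAt ℝ (fun y => (u y).2) x := (hu2.differentiable one_ne_zero) x
    have df : DifferentiableAt ℝ f x := (hf.differentiable one_ne_zero) x
    have e1 : pd1 g₁ x = pd1 (fun y => (u y).1) x * (f x * f x)
        + (u x).1 * (pd1 f x * f x + f x * pd1 f x) := by
      rw [hg₁def]
      rw [pd1_mul (b := fun y => f y * f y) d1 (df.mul df), pd1_mul df df]
    have e2 : pd2 g₂ x = pd2 (fun y => (u y).2) x * (f x * f x)
        + (u x).2 * (pd2 f x * f x + f x * pd2 f x) := by
      rw [hg₂def]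
      rw [pd2_mul (b := fun y => f y * f y) d2 (df.mul df), pd2_mul df df]
    have hd := hdiv x
    rw [e1, e2]
    nlinarith [hd]
  have hint1 : IntegrableOn (pd1 g₁) (domD l) := integrableOn_domD (cont_pd1 hg₁) l
  have hint2 : IntegrableOn (pd2 g₂) (domD l) := integrableOn_domD (cont_pd2 hg₂) l
  calc ∫ x in domD l, ((u x).1 * pd1 f x * f x + (u x).2 * pd2 f x * f x)
      = ∫ x in domD l, (pd1 g₁ x + pd2 g₂ x) / 2 := by
        exact setIntegral_congr_fun (measD l) (fun x _ => hident x)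
    _ = (∫ x in domD l, (pd1 g₁ x + pd2 g₂ x)) / 2 := by
        rw [integral_div]
    _ = ((∫ x in domD l, pd1 g₁ x) + ∫ x in domD l, pd2 g₂ x) / 2 := by
        rw [integral_add hint1 hint2]
    _ = 0 := by
        rw [integral_pd1_eq_zero hl hg₁ (fun x₁ x₂ => by simp only [hg₁def, huper, hfper]),
          integral_pd2_eq_zero hl hg₂ (fun x₁ => by simp only [hg₂def, hu0, hu1b]; norm_num)]
        norm_num

lemma abs_sum6_le (a₁ a₂ a₃ a₄ a₅ a₆ b₁ b₂ b₃ b₄ b₅ b₆ : ℝ) :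
    |a₁*b₁ + a₂*b₂ + a₃*b₃ + a₄*b₄ + a₅*b₅ + a₆*b₆|
      ≤ Real.sqrt (a₁^2+a₂^2+a₃^2+a₄^2+a₅^2+a₆^2) * Real.sqrt (b₁^2+b₂^2+b₃^2+b₄^2+b₅^2+b₆^2) := by
  have h := Finset.sum_mul_sq_le_sq_mul_sq Finset.univ
    (fun i : Fin 6 => ![a₁,a₂,a₃,a₄,a₅,a₆] i) (fun i => ![b₁,b₂,b₃,b₄,b₅,b₆] i)
  simp [Fin.sum_univ_succ, Matrix.cons_val_zero, Matrix.cons_val_succ] at h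
  have h2 : |a₁*b₁ + a₂*b₂ + a₃*b₃ + a₄*b₄ + a₅*b₅ + a₆*b₆|
      = Real.sqrt ((a₁*b₁ + a₂*b₂ + a₃*b₃ + a₄*b₄ + a₅*b₅ + a₆*b₆)^2) :=
    (Real.sqrt_sq_eq_abs _).symm
  rw [h2, ← Real.sqrt_mul (by positivity)]
  exact Real.sqrt_le_sqrt (by nlinarith [h])

lemma integral_CS {l : ℝ} {F G : ℝ × ℝ → ℝ} (hF : Continuous F) (hG : Continuous G)
    (hF0 : ∀ x, 0 ≤ F x) (hG0 : ∀ x, 0 ≤ G x) :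
    ∫ x in domD l, F x * G x
      ≤ Real.sqrt (∫ x in domD l, F x ^ 2) * Real.sqrt (∫ x in domD l, G x ^ 2) := by
  set A := ∫ x in domD l, F x ^ 2 with hA
  set B := ∫ x in domD l, F x * G x with hB
  set C := ∫ x in domD l, G x ^ 2 with hC
  have hintF2 : IntegrableOn (fun x => F x ^ 2) (domD l) := integrableOn_domD (by fun_prop) l
  have hintG2 : IntegrableOn (fun x => G x ^ 2) (domD l) := integrableOn_domD (by fun_prop) l
  have hintFG : IntegrableOn (fun x => F x * G x) (domD l) := integrableOn_domD (by fun_prop) l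
  have key : ∀ t : ℝ, 0 ≤ A * (t * t) + (-2 * B) * t + C := by
    intro t
    have expand : ∀ x : ℝ × ℝ, (t * F x - G x) ^ 2
        = t ^ 2 * F x ^ 2 + (-2 * t) * (F x * G x) + G x ^ 2 := fun x => by ring
    have h0 : 0 ≤ ∫ x in domD l, (t * F x - G x) ^ 2 :=
      setIntegral_nonneg (measD l) (fun x _ => sq_nonneg _)
    have heq : ∫ x in domD l, (t * F x - G x) ^ 2 = A * (t * t) + (-2 * B) * t + C := by
      simp_rw [expand]
      rw [integral_add (by exact (hintF2.const_mul _).add (hintFG.const_mul _))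
        hintG2, integral_add (hintF2.const_mul _) (hintFG.const_mul _),
        integral_const_mul, integral_const_mul]
      ring
    linarith [heq ▸ h0]
  have hd : discrim A (-2 * B) C ≤ 0 := discrim_le_zero key
  rw [discrim] at hd
  have hBsq : B ^ 2 ≤ A * C := by nlinarith
  have hB0 : 0 ≤ B :=
    setIntegral_nonneg (measD l) (fun x _ => mul_nonneg (hF0 x) (hG0 x))
  calc B = Real.sqrt (B ^ 2) := (Real.sqrt_sq hB0).symm
    _ ≤ Real.sqrt (A * C) := Real.sqrt_le_sqrt hBsq
    _ = Real.sqrt A * Real.sqrt C := Real.sqrt_mul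
        (setIntegral_nonneg (measD l) (fun x _ => sq_nonneg _)) _

end Helpers
lemma rpow_quarter_pow4 {J : ℝ} (hJ : 0 ≤ J) : (J ^ ((1:ℝ)/4)) ^ (4:ℕ) = J := by
  rw [← Real.rpow_natCast (J ^ ((1:ℝ)/4)) 4, ← Real.rpow_mul hJ]
  norm_num

set_option maxHeartbeats 4000000 in
/-- Estimate \eqref{diffB-1}: with `U = u − v`, `Θ = θ − η`, `Φ = (U,Θ)` and `ψ = (v,η)`,
there is a constant `c > 0` depending only on `c₁` such that
`|⟨B(φ)−B(ψ), φ−ψ⟩| ≤ c |Φ| ‖Φ‖ ‖ψ‖`. -/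
theorem B_difference_estimate (c₁ : ℝ) (hc₁ : 0 < c₁) :
    ∃ c : ℝ, 0 < c ∧
      ∀ (l : ℝ), 0 < l →
      ∀ (u v : ℝ × ℝ → ℝ × ℝ) (θ η : ℝ × ℝ → ℝ),
        AdmissibleVec l u → AdmissibleVec l v →
        AdmissibleScalar l θ → AdmissibleScalar l η →
        (L4normVec l (fun x => u x - v x)) ^ 2
          ≤ c₁ * L2normVec l (fun x => u x - v x) * H1normVec l (fun x => u x - v x) →
        (L4normScalar l (fun x => θ x - η x)) ^ 2
          ≤ c₁ * L2normScalar l (fun x => θ x - η x) * H1normScalar l (fun x => θ x - η x) →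
        |B1 l u u (fun x => u x - v x) - B1 l v v (fun x => u x - v x)
            + B2 l u θ (fun x => θ x - η x) - B2 l v η (fun x => θ x - η x)|
          ≤ c * Real.sqrt ((L2normVec l (fun x => u x - v x)) ^ 2
                + (L2normScalar l (fun x => θ x - η x)) ^ 2)
              * Real.sqrt ((H1normVec l (fun x => u x - v x)) ^ 2
                + (H1normScalar l (fun x => θ x - η x)) ^ 2)
              * Real.sqrt ((H1normVec l v) ^ 2 + (H1normScalar l η) ^ 2) := by
  refine ⟨2 * c₁, by positivity, ?_⟩
  intro l hl u v θ η hu hv hθ hη hU4 hΘ4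
  have huC := hu.1
  have hvC := hv.1
  have hθC := hθ.1
  have hηC := hη.1
  have hu1C : ContDiff ℝ 1 (fun y => (u y).1) := contDiff_fst.comp huC
  have hu2C : ContDiff ℝ 1 (fun y => (u y).2) := contDiff_snd.comp huC
  have hv1C : ContDiff ℝ 1 (fun y => (v y).1) := contDiff_fst.comp hvC
  have hv2C : ContDiff ℝ 1 (fun y => (v y).2) := contDiff_snd.comp hvC
  set U1 : ℝ × ℝ → ℝ := fun y => (u y).1 - (v y).1 with hU1d
  set U2 : ℝ × ℝ → ℝ := fun y => (u y).2 - (v y).2 with hU2d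
  set Th : ℝ × ℝ → ℝ := fun y => θ y - η y with hThd
  have hU1C : ContDiff ℝ 1 U1 := hu1C.sub hv1C
  have hU2C : ContDiff ℝ 1 U2 := hu2C.sub hv2C
  have hThC : ContDiff ℝ 1 Th := hθC.sub hηC
  have hU1per : ∀ x₁ x₂ : ℝ, U1 (x₁ + l, x₂) = U1 (x₁, x₂) := fun a b => by
    simp only [hU1d, hu.2.1 a b, hv.2.1 a b]
  have hU2per : ∀ x₁ x₂ : ℝ, U2 (x₁ + l, x₂) = U2 (x₁, x₂) := fun a b => by
    simp only [hU2d, hu.2.1 a b, hv.2.1 a b]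
  have hThper : ∀ x₁ x₂ : ℝ, Th (x₁ + l, x₂) = Th (x₁, x₂) := fun a b => by
    simp only [hThd, hθ.2 a b, hη.2 a b]
  -- continuity facts
  have cu : Continuous u := huC.continuous
  have cv : Continuous v := hvC.continuous
  have cθ : Continuous θ := hθC.continuous
  have cη : Continuous η := hηC.continuous
  have cU1 : Continuous U1 := hU1C.continuous
  have cU2 : Continuous U2 := hU2C.continuous
  have cTh : Continuous Th := hThC.continuous
  have cp1u1 : Continuous (pd1 (fun y => (u y).1)) := cont_pd1 hu1C
  have cp1u2 : Continuous (pd1 (fun y => (u y).2)) := cont_pd1 hu2C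
  have cp2u1 : Continuous (pd2 (fun y => (u y).1)) := cont_pd2 hu1C
  have cp2u2 : Continuous (pd2 (fun y => (u y).2)) := cont_pd2 hu2C
  have cp1v1 : Continuous (pd1 (fun y => (v y).1)) := cont_pd1 hv1C
  have cp1v2 : Continuous (pd1 (fun y => (v y).2)) := cont_pd1 hv2C
  have cp2v1 : Continuous (pd2 (fun y => (v y).1)) := cont_pd2 hv1C
  have cp2v2 : Continuous (pd2 (fun y => (v y).2)) := cont_pd2 hv2C
  have cp1θ : Continuous (pd1 θ) := cont_pd1 hθC
  have cp2θ : Continuous (pd2 θ) := cont_pd2 hθC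
  have cp1η : Continuous (pd1 η) := cont_pd1 hηC
  have cp2η : Continuous (pd2 η) := cont_pd2 hηC
  have cp1U1 : Continuous (pd1 U1) := cont_pd1 hU1C
  have cp2U1 : Continuous (pd2 U1) := cont_pd2 hU1C
  have cp1U2 : Continuous (pd1 U2) := cont_pd1 hU2C
  have cp2U2 : Continuous (pd2 U2) := cont_pd2 hU2C
  have cp1Th : Continuous (pd1 Th) := cont_pd1 hThC
  have cp2Th : Continuous (pd2 Th) := cont_pd2 hThC
  -- integrand functions
  set i₁ : ℝ × ℝ → ℝ := fun x =>
    (u x).1 * pd1 (fun y => (u y).1) x * U1 x + (u x).1 * pd1 (fun y => (u y).2) x * U2 x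
      + (u x).2 * pd2 (fun y => (u y).1) x * U1 x + (u x).2 * pd2 (fun y => (u y).2) x * U2 x
    with hi₁d
  set i₂ : ℝ × ℝ → ℝ := fun x =>
    (v x).1 * pd1 (fun y => (v y).1) x * U1 x + (v x).1 * pd1 (fun y => (v y).2) x * U2 x
      + (v x).2 * pd2 (fun y => (v y).1) x * U1 x + (v x).2 * pd2 (fun y => (v y).2) x * U2 x
    with hi₂d
  set j₁ : ℝ × ℝ → ℝ := fun x =>
    (u x).1 * pd1 θ x * Th x + (u x).2 * pd2 θ x * Th x with hj₁d
  set j₂ : ℝ × ℝ → ℝ := fun x =>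
    (v x).1 * pd1 η x * Th x + (v x).2 * pd2 η x * Th x with hj₂d
  set I : ℝ × ℝ → ℝ := fun x =>
    U1 x * pd1 (fun y => (v y).1) x * U1 x + U1 x * pd1 (fun y => (v y).2) x * U2 x
      + U2 x * pd2 (fun y => (v y).1) x * U1 x + U2 x * pd2 (fun y => (v y).2) x * U2 x
      + (U1 x * pd1 η x * Th x + U2 x * pd2 η x * Th x) with hId
  have ci₁ : Continuous i₁ := by rw [hi₁d]; fun_prop
  have ci₂ : Continuous i₂ := by rw [hi₂d]; fun_prop
  have cj₁ : Continuous j₁ := by rw [hj₁d]; fun_prop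
  have cj₂ : Continuous j₂ := by rw [hj₂d]; fun_prop
  have cI : Continuous I := by rw [hId]; fun_prop
  have hii₁ : IntegrableOn i₁ (domD l) := integrableOn_domD ci₁ l
  have hii₂ : IntegrableOn i₂ (domD l) := integrableOn_domD ci₂ l
  have hij₁ : IntegrableOn j₁ (domD l) := integrableOn_domD cj₁ l
  have hij₂ : IntegrableOn j₂ (domD l) := integrableOn_domD cj₂ l
  have hIint : IntegrableOn I (domD l) := integrableOn_domD cI l
  have hK1int : IntegrableOn
      (fun x => (u x).1 * pd1 U1 x * U1 x + (u x).2 * pd2 U1 x * U1 x) (domD l) :=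
    integrableOn_domD (by fun_prop) l
  have hK2int : IntegrableOn
      (fun x => (u x).1 * pd1 U2 x * U2 x + (u x).2 * pd2 U2 x * U2 x) (domD l) :=
    integrableOn_domD (by fun_prop) l
  have hK3int : IntegrableOn
      (fun x => (u x).1 * pd1 Th x * Th x + (u x).2 * pd2 Th x * Th x) (domD l) :=
    integrableOn_domD (by fun_prop) l
  -- values of the trilinear forms
  have hB1u : B1 l u u (fun x => u x - v x) = ∫ x in domD l, i₁ x := by
    rw [B1]
    refine setIntegral_congr_fun (measD l) (fun x _ => ?_)
    simp only [hi₁d, hU1d, hU2d, Prod.fst_sub, Prod.snd_sub]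
  have hB1v : B1 l v v (fun x => u x - v x) = ∫ x in domD l, i₂ x := by
    rw [B1]
    refine setIntegral_congr_fun (measD l) (fun x _ => ?_)
    simp only [hi₂d, hU1d, hU2d, Prod.fst_sub, Prod.snd_sub]
  have hB2u : B2 l u θ Th = ∫ x in domD l, j₁ x := by rw [B2]
  have hB2v : B2 l v η Th = ∫ x in domD l, j₂ x := by rw [B2]
  -- skew-symmetry : the three cancellation integrals vanish
  have hsk1 : ∫ x in domD l,
      ((u x).1 * pd1 U1 x * U1 x + (u x).2 * pd2 U1 x * U1 x) = 0 :=
    skew hl hu hU1C hU1per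
  have hsk2 : ∫ x in domD l,
      ((u x).1 * pd1 U2 x * U2 x + (u x).2 * pd2 U2 x * U2 x) = 0 :=
    skew hl hu hU2C hU2per
  have hsk3 : ∫ x in domD l,
      ((u x).1 * pd1 Th x * Th x + (u x).2 * pd2 Th x * Th x) = 0 :=
    skew hl hu hThC hThper
  -- pointwise decomposition identity
  have hpt : ∀ x : ℝ × ℝ, i₁ x - i₂ x + j₁ x - j₂ x
      = I x + (((u x).1 * pd1 U1 x * U1 x + (u x).2 * pd2 U1 x * U1 x)
          + (((u x).1 * pd1 U2 x * U2 x + (u x).2 * pd2 U2 x * U2 x)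
          + ((u x).1 * pd1 Th x * Th x + (u x).2 * pd2 Th x * Th x))) := by
    intro x
    have du1 : DifferentiableAt ℝ (fun y => (u y).1) x := hu1C.differentiable one_ne_zero x
    have du2 : DifferentiableAt ℝ (fun y => (u y).2) x := hu2C.differentiable one_ne_zero x
    have dv1 : DifferentiableAt ℝ (fun y => (v y).1) x := hv1C.differentiable one_ne_zero x
    have dv2 : DifferentiableAt ℝ (fun y => (v y).2) x := hv2C.differentiable one_ne_zero x
    have dθ : DifferentiableAt ℝ θ x := hθC.differentiable one_ne_zero x
    have dη : DifferentiableAt ℝ η x := hηC.differentiable one_ne_zero x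
    simp only [hi₁d, hi₂d, hj₁d, hj₂d, hId, hU1d, hU2d, hThd]
    rw [pd1_sub du1 dv1, pd2_sub du1 dv1, pd1_sub du2 dv2, pd2_sub du2 dv2,
      pd1_sub dθ dη, pd2_sub dθ dη]
    ring
  -- the full difference equals ∫ I
  have hIsum : B1 l u u (fun x => u x - v x) - B1 l v v (fun x => u x - v x)
      + B2 l u θ Th - B2 l v η Th = ∫ x in domD l, I x := by
    have h12 : IntegrableOn (fun x => i₁ x - i₂ x) (domD l) := hii₁.sub hii₂
    have h123 : IntegrableOn (fun x => i₁ x - i₂ x + j₁ x) (domD l) := h12.add hij₁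
    have hK23 : IntegrableOn (fun x =>
        ((u x).1 * pd1 U2 x * U2 x + (u x).2 * pd2 U2 x * U2 x)
          + ((u x).1 * pd1 Th x * Th x + (u x).2 * pd2 Th x * Th x)) (domD l) :=
      hK2int.add hK3int
    have hK123 : IntegrableOn (fun x =>
        ((u x).1 * pd1 U1 x * U1 x + (u x).2 * pd2 U1 x * U1 x)
          + (((u x).1 * pd1 U2 x * U2 x + (u x).2 * pd2 U2 x * U2 x)
            + ((u x).1 * pd1 Th x * Th x + (u x).2 * pd2 Th x * Th x))) (domD l) :=
      hK1int.add hK23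
    rw [hB1u, hB1v, hB2u, hB2v, ← integral_sub hii₁ hii₂,
      ← integral_add h12 hij₁, ← integral_sub h123 hij₂,
      setIntegral_congr_fun (measD l) (fun x _ => hpt x),
      integral_add hIint hK123, integral_add hK1int hK23, integral_add hK2int hK3int,
      hsk1, hsk2, hsk3]
    ring
  rw [hIsum]
  -- Hölder-type bound
  set F : ℝ × ℝ → ℝ := fun x => U1 x ^ 2 + U2 x ^ 2 + Th x ^ 2 with hFd
  set Q : ℝ × ℝ → ℝ := fun x =>
    pd1 (fun y => (v y).1) x ^ 2 + pd2 (fun y => (v y).1) x ^ 2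
      + pd1 (fun y => (v y).2) x ^ 2 + pd2 (fun y => (v y).2) x ^ 2
      + pd1 η x ^ 2 + pd2 η x ^ 2 with hQd
  set G : ℝ × ℝ → ℝ := fun x => Real.sqrt (Q x) with hGd
  have hQcont : Continuous Q := by rw [hQd]; fun_prop
  have hQ0 : ∀ x, 0 ≤ Q x := fun x => by simp only [hQd]; positivity
  have hFcont : Continuous F := by rw [hFd]; fun_prop
  have hGcont : Continuous G := by rw [hGd]; exact Real.continuous_sqrt.comp hQcont
  have hF0 : ∀ x, 0 ≤ F x := fun x => by simp only [hFd]; positivity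
  have hG0 : ∀ x, 0 ≤ G x := fun x => by simp only [hGd]; exact Real.sqrt_nonneg _
  -- pointwise Cauchy–Schwarz bound
  have hpb : ∀ x : ℝ × ℝ, |I x| ≤ F x * G x := by
    intro x
    have h6 := abs_sum6_le (U1 x * U1 x) (U2 x * U1 x) (U1 x * U2 x) (U2 x * U2 x)
      (U1 x * Th x) (U2 x * Th x)
      (pd1 (fun y => (v y).1) x) (pd2 (fun y => (v y).1) x)
      (pd1 (fun y => (v y).2) x) (pd2 (fun y => (v y).2) x) (pd1 η x) (pd2 η x)
    have hIx : I x = U1 x * U1 x * pd1 (fun y => (v y).1) x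
        + U2 x * U1 x * pd2 (fun y => (v y).1) x
        + U1 x * U2 x * pd1 (fun y => (v y).2) x
        + U2 x * U2 x * pd2 (fun y => (v y).2) x
        + U1 x * Th x * pd1 η x + U2 x * Th x * pd2 η x := by
      rw [hId]; ring
    rw [hIx]
    have hGx : Real.sqrt (pd1 (fun y => (v y).1) x ^ 2 + pd2 (fun y => (v y).1) x ^ 2
        + pd1 (fun y => (v y).2) x ^ 2 + pd2 (fun y => (v y).2) x ^ 2
        + pd1 η x ^ 2 + pd2 η x ^ 2) = G x := by
      simp only [hGd, hQd]
    refine h6.trans (mul_le_mul ?_ (le_of_eq hGx) (Real.sqrt_nonneg _) (hF0 x))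
    have hle : (U1 x * U1 x) ^ 2 + (U2 x * U1 x) ^ 2 + (U1 x * U2 x) ^ 2
        + (U2 x * U2 x) ^ 2 + (U1 x * Th x) ^ 2 + (U2 x * Th x) ^ 2 ≤ F x ^ 2 := by
      simp only [hFd]
      nlinarith [sq_nonneg (Th x ^ 2), mul_nonneg (sq_nonneg (U1 x)) (sq_nonneg (Th x)),
        mul_nonneg (sq_nonneg (U2 x)) (sq_nonneg (Th x))]
    calc Real.sqrt ((U1 x * U1 x) ^ 2 + (U2 x * U1 x) ^ 2 + (U1 x * U2 x) ^ 2
          + (U2 x * U2 x) ^ 2 + (U1 x * Th x) ^ 2 + (U2 x * Th x) ^ 2)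
        ≤ Real.sqrt (F x ^ 2) := Real.sqrt_le_sqrt hle
      _ = F x := Real.sqrt_sq (hF0 x)
  -- integral bounds
  have habsint : IntegrableOn (fun x => |I x|) (domD l) := integrableOn_domD cI.abs l
  have hFGint : IntegrableOn (fun x => F x * G x) (domD l) :=
    integrableOn_domD (hFcont.mul hGcont) l
  have step1 : |∫ x in domD l, I x| ≤ ∫ x in domD l, |I x| := by
    simpa [Real.norm_eq_abs] using
      norm_integral_le_integral_norm (μ := volume.restrict (domD l)) I
  have step2 : ∫ x in domD l, |I x| ≤ ∫ x in domD l, F x * G x :=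
    setIntegral_mono_on habsint hFGint (measD l) (fun x _ => hpb x)
  have step3 : ∫ x in domD l, F x * G x
      ≤ Real.sqrt (∫ x in domD l, F x ^ 2) * Real.sqrt (∫ x in domD l, G x ^ 2) :=
    integral_CS hFcont hGcont hF0 hG0
  -- identify ∫ G²
  have hQvint : IntegrableOn (fun x =>
      pd1 (fun y => (v y).1) x ^ 2 + pd2 (fun y => (v y).1) x ^ 2
        + pd1 (fun y => (v y).2) x ^ 2 + pd2 (fun y => (v y).2) x ^ 2) (domD l) :=
    integrableOn_domD (by fun_prop) l
  have hQηint : IntegrableOn (fun x => pd1 η x ^ 2 + pd2 η x ^ 2) (domD l) :=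
    integrableOn_domD (by fun_prop) l
  have hGsq : ∫ x in domD l, G x ^ 2 = H1normVec l v ^ 2 + H1normScalar l η ^ 2 := by
    have h1 : ∫ x in domD l, G x ^ 2 = ∫ x in domD l,
        ((pd1 (fun y => (v y).1) x ^ 2 + pd2 (fun y => (v y).1) x ^ 2
          + pd1 (fun y => (v y).2) x ^ 2 + pd2 (fun y => (v y).2) x ^ 2)
          + (pd1 η x ^ 2 + pd2 η x ^ 2)) := by
      refine setIntegral_congr_fun (measD l) (fun x _ => ?_)
      simp only [hGd]
      rw [Real.sq_sqrt (hQ0 x)]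
      simp only [hQd]
      ring
    rw [h1, integral_add hQvint hQηint, H1normVec, H1normScalar,
      Real.sq_sqrt (setIntegral_nonneg (measD l) (fun x _ => by positivity)),
      Real.sq_sqrt (setIntegral_nonneg (measD l) (fun x _ => by positivity))]
  -- bound ∫ F²
  have hJVint : IntegrableOn (fun x => (U1 x ^ 2 + U2 x ^ 2) ^ 2) (domD l) :=
    integrableOn_domD (by fun_prop) l
  have hJSint : IntegrableOn (fun x => Th x ^ 4) (domD l) :=
    integrableOn_domD (by fun_prop) l
  have hFsqint : IntegrableOn (fun x => F x ^ 2) (domD l) :=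
    integrableOn_domD (by fun_prop) l
  have hJV0 : 0 ≤ ∫ x in domD l, (U1 x ^ 2 + U2 x ^ 2) ^ 2 :=
    setIntegral_nonneg (measD l) (fun x _ => by positivity)
  have hJS0 : 0 ≤ ∫ x in domD l, Th x ^ 4 :=
    setIntegral_nonneg (measD l) (fun x _ => by positivity)
  -- relate L4 norms to these integrals
  have hL4V : L4normVec l (fun x => u x - v x)
      = (∫ x in domD l, (U1 x ^ 2 + U2 x ^ 2) ^ 2) ^ ((1:ℝ)/4) := by
    rw [L4normVec]
    congr 1
  have hL4S : L4normScalar l Th = (∫ x in domD l, Th x ^ 4) ^ ((1:ℝ)/4) := by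
    rw [L4normScalar]
  have hJVle : ∫ x in domD l, (U1 x ^ 2 + U2 x ^ 2) ^ 2
      ≤ (c₁ * L2normVec l (fun x => u x - v x) * H1normVec l (fun x => u x - v x)) ^ 2 := by
    calc ∫ x in domD l, (U1 x ^ 2 + U2 x ^ 2) ^ 2
        = ((∫ x in domD l, (U1 x ^ 2 + U2 x ^ 2) ^ 2) ^ ((1:ℝ)/4)) ^ (4:ℕ) :=
          (rpow_quarter_pow4 hJV0).symm
      _ = (L4normVec l (fun x => u x - v x) ^ 2) ^ 2 := by rw [hL4V]; ring
      _ ≤ (c₁ * L2normVec l (fun x => u x - v x) * H1normVec l (fun x => u x - v x)) ^ 2 :=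
          pow_le_pow_left₀ (sq_nonneg _) hU4 2
  have hJSle : ∫ x in domD l, Th x ^ 4
      ≤ (c₁ * L2normScalar l Th * H1normScalar l Th) ^ 2 := by
    calc ∫ x in domD l, Th x ^ 4
        = ((∫ x in domD l, Th x ^ 4) ^ ((1:ℝ)/4)) ^ (4:ℕ) := (rpow_quarter_pow4 hJS0).symm
      _ = (L4normScalar l Th ^ 2) ^ 2 := by rw [hL4S]; ring
      _ ≤ (c₁ * L2normScalar l Th * H1normScalar l Th) ^ 2 :=
          pow_le_pow_left₀ (sq_nonneg _) hΘ4 2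
  have hF2 : ∫ x in domD l, F x ^ 2
      ≤ 2 * (∫ x in domD l, (U1 x ^ 2 + U2 x ^ 2) ^ 2) + 2 * (∫ x in domD l, Th x ^ 4) := by
    have hpw : ∀ x : ℝ × ℝ, F x ^ 2 ≤ 2 * (U1 x ^ 2 + U2 x ^ 2) ^ 2 + 2 * Th x ^ 4 :=
      fun x => by simp only [hFd]; nlinarith [sq_nonneg (U1 x ^ 2 + U2 x ^ 2 - Th x ^ 2)]
    have hsum2int : IntegrableOn (fun x => 2 * (U1 x ^ 2 + U2 x ^ 2) ^ 2 + 2 * Th x ^ 4)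
        (domD l) := integrableOn_domD (by fun_prop) l
    calc ∫ x in domD l, F x ^ 2
        ≤ ∫ x in domD l, (2 * (U1 x ^ 2 + U2 x ^ 2) ^ 2 + 2 * Th x ^ 4) :=
          setIntegral_mono_on hFsqint hsum2int (measD l) (fun x _ => hpw x)
      _ = 2 * (∫ x in domD l, (U1 x ^ 2 + U2 x ^ 2) ^ 2) + 2 * (∫ x in domD l, Th x ^ 4) := by
          have hJV2 : IntegrableOn (fun x => 2 * (U1 x ^ 2 + U2 x ^ 2) ^ 2) (domD l) :=
            hJVint.const_mul 2
          have hJS2 : IntegrableOn (fun x => 2 * Th x ^ 4) (domD l) := hJSint.const_mul 2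
          rw [integral_add hJV2 hJS2, integral_const_mul, integral_const_mul]
  -- nonnegativity of the norms
  have hL2V0 : 0 ≤ L2normVec l (fun x => u x - v x) := by
    rw [L2normVec]; exact Real.sqrt_nonneg _
  have hL2S0 : 0 ≤ L2normScalar l Th := by rw [L2normScalar]; exact Real.sqrt_nonneg _
  have hHV0 : 0 ≤ H1normVec l (fun x => u x - v x) := by
    rw [H1normVec]; exact Real.sqrt_nonneg _
  have hHS0 : 0 ≤ H1normScalar l Th := by rw [H1normScalar]; exact Real.sqrt_nonneg _
  set p : ℝ := L2normVec l (fun x => u x - v x) ^ 2 + L2normScalar l Th ^ 2 with hpd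
  set q : ℝ := H1normVec l (fun x => u x - v x) ^ 2 + H1normScalar l Th ^ 2 with hqd
  have hp0 : 0 ≤ p := by simp only [hpd]; positivity
  have hq0 : 0 ≤ q := by simp only [hqd]; positivity
  have hF2b : ∫ x in domD l, F x ^ 2 ≤ 4 * c₁ ^ 2 * (p * q) := by
    have hcross : L2normVec l (fun x => u x - v x) ^ 2 * H1normVec l (fun x => u x - v x) ^ 2
        + L2normScalar l Th ^ 2 * H1normScalar l Th ^ 2 ≤ p * q := by
      simp only [hpd, hqd]
      nlinarith [mul_nonneg (sq_nonneg (L2normVec l (fun x => u x - v x)))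
          (sq_nonneg (H1normScalar l Th)),
        mul_nonneg (sq_nonneg (L2normScalar l Th))
          (sq_nonneg (H1normVec l (fun x => u x - v x)))]
    have e1 : (c₁ * L2normVec l (fun x => u x - v x) * H1normVec l (fun x => u x - v x)) ^ 2
        = c₁ ^ 2 * (L2normVec l (fun x => u x - v x) ^ 2
            * H1normVec l (fun x => u x - v x) ^ 2) := by ring
    have e2 : (c₁ * L2normScalar l Th * H1normScalar l Th) ^ 2
        = c₁ ^ 2 * (L2normScalar l Th ^ 2 * H1normScalar l Th ^ 2) := by ring
    have hpq0 : 0 ≤ c₁ ^ 2 * (p * q) := by positivity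
    nlinarith [hF2, hJVle, hJSle, mul_le_mul_of_nonneg_left hcross (sq_nonneg c₁)]
  have hsqF : Real.sqrt (∫ x in domD l, F x ^ 2) ≤ 2 * c₁ * Real.sqrt p * Real.sqrt q := by
    have hrhs : (2 * c₁ * Real.sqrt p * Real.sqrt q) ^ 2 = 4 * c₁ ^ 2 * (p * q) := by
      have e : (2 * c₁ * Real.sqrt p * Real.sqrt q) ^ 2
          = 4 * c₁ ^ 2 * (Real.sqrt p ^ 2 * Real.sqrt q ^ 2) := by ring
      rw [e, Real.sq_sqrt hp0, Real.sq_sqrt hq0]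
    calc Real.sqrt (∫ x in domD l, F x ^ 2)
        ≤ Real.sqrt ((2 * c₁ * Real.sqrt p * Real.sqrt q) ^ 2) := by
          rw [hrhs]; exact Real.sqrt_le_sqrt hF2b
      _ = 2 * c₁ * Real.sqrt p * Real.sqrt q :=
          Real.sqrt_sq (by positivity)
  -- final assembly
  have hGr : Real.sqrt (∫ x in domD l, G x ^ 2)
      = Real.sqrt (H1normVec l v ^ 2 + H1normScalar l η ^ 2) := by rw [hGsq]
  calc |∫ x in domD l, I x|
      ≤ ∫ x in domD l, |I x| := step1
    _ ≤ ∫ x in domD l, F x * G x := step2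
    _ ≤ Real.sqrt (∫ x in domD l, F x ^ 2) * Real.sqrt (∫ x in domD l, G x ^ 2) := step3
    _ = Real.sqrt (∫ x in domD l, F x ^ 2)
          * Real.sqrt (H1normVec l v ^ 2 + H1normScalar l η ^ 2) := by rw [hGr]
    _ ≤ 2 * c₁ * Real.sqrt p * Real.sqrt q
          * Real.sqrt (H1normVec l v ^ 2 + H1normScalar l η ^ 2) :=
        mul_le_mul_of_nonneg_right hsqF (Real.sqrt_nonneg _)
end
end

section
/- Let (Ω, F, P) be a probability space and T > 0. Let X, Y, I : [0,T] × Ω → [0,∞) be measurable processes such that for a.e. ω the maps t ↦ X(t,ω), t ↦ Y(t,ω), t ↦ I(t,ω) are non-decreasing, with X(t), Y(t), I(t) integrable for each t. Let φ : [0,T] × Ω → [0,∞) be measurable with ∫₀ᵀ φ(s,ω) ds ≤ C almost surely for a constant C ≥ 0, and let Z : Ω → [0,∞) be integrable. Assume there exist constants α > 0, 0 < β ≤ 1/(2(1 + C e^C)), 0 < γ ≤ α/(2(1 + C e^C)) and C̃ > 0 such that: (i) almost surely, for every t ∈ [0,T], X(t) + α Y(t) ≤ Z + ∫₀ᵗ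 φ(r) X(r) dr + I(t); (ii) for every t ∈ [0,T], E[I(t)] ≤ β E[X(t)] + γ E[Y(t)] + C̃; and (iii) X is (essentially) bounded on [0,T] × Ω. Then for every t ∈ [0,T], E[X(t) + α Y(t)] ≤ 2 (1 + C e^C)(E[Z] + C̃). -/
open MeasureTheory Filter


lemma gronwall_core (g u : ℝ → ℝ) (t a : ℝ) (ht : 0 ≤ t)
    (hg : ∀ r, 0 ≤ g r) (hu : ∀ r, 0 ≤ u r)
    (hgm : Measurable g) (hum : Measurable u)
    (hgint : IntegrableOn g (Set.Icc 0 t))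
    (humono : ∀ s ∈ Set.Icc 0 t, ∀ r ∈ Set.Icc 0 t, s ≤ r → u s ≤ u r)
    (ha : 0 ≤ a)
    (hIneq : ∀ s ∈ Set.Icc 0 t, u s ≤ a + ∫ r in Set.Icc (0:ℝ) s, g r * u r) :
    (∫ r in Set.Icc (0:ℝ) t, g r * u r) ≤
      (Real.exp (∫ r in Set.Icc (0:ℝ) t, g r) - 1) * a := by
  set F : ℝ → ℝ := fun s => ∫ r in Set.Icc (0:ℝ) s, g r with hF
  set Ft : ℝ := F t with hFtdef
  -- basic facts
  have hF0 : F 0 = 0 := by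
    simp only [hF, Set.Icc_self]
    have h0 : (volume : Measure ℝ) ({0} : Set ℝ) = 0 := measure_singleton 0
    rw [Measure.restrict_eq_zero.mpr h0, integral_zero_measure]
  have hFmono : ∀ p q : ℝ, 0 ≤ p → p ≤ q → q ≤ t → F p ≤ F q := by
    intro p q hp hpq hqt
    refine setIntegral_mono_set (hgint.mono_set ?_) ?_ ?_
    · exact Set.Icc_subset_Icc le_rfl hqt
    · exact Filter.Eventually.of_forall fun r => hg r
    · exact (Set.Icc_subset_Icc le_rfl hpq).eventuallyLE
  have hFnonneg : ∀ q : ℝ, 0 ≤ F q := fun q =>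
    setIntegral_nonneg measurableSet_Icc fun r _ => hg r
  have hFcont : ContinuousOn F (Set.Icc 0 t) :=
    intervalIntegral.continuousOn_primitive_Icc hgint
  have huB : ∀ r ∈ Set.Icc (0:ℝ) t, u r ≤ u t := fun r hr =>
    humono r hr t ⟨ht, le_rfl⟩ hr.2
  have hut : 0 ≤ u t := hu t
  -- integrability of g * u
  have hgu_int : IntegrableOn (fun r => g r * u r) (Set.Icc 0 t) := by
    refine Integrable.mono (hgint.const_mul (u t)) ((hgm.mul hum).aestronglyMeasurable) ?_
    rw [ae_restrict_iff' measurableSet_Icc]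
    refine Filter.Eventually.of_forall fun r hr => ?_
    rw [Real.norm_of_nonneg (mul_nonneg (hg r) (hu r)),
      Real.norm_of_nonneg (mul_nonneg hut (hg r))]
    rw [mul_comm (u t) (g r)]
    exact mul_le_mul_of_nonneg_left (huB r hr) (hg r)
  -- generic upper bound of ∫ gu over a subinterval by (F-increment) * u-value
  have hbound : ∀ p q : ℝ, 0 ≤ p → p ≤ q → q ≤ t →
      (∫ r in Set.Ioc p q, g r * u r) ≤ (∫ r in Set.Ioc p q, g r) * u q := by
    intro p q hp hpq hqt
    have hsub : Set.Ioc p q ⊆ Set.Icc (0:ℝ) t := fun r hr =>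
      ⟨le_trans hp hr.1.le, le_trans hr.2 hqt⟩
    have h1 : (∫ r in Set.Ioc p q, g r * u r) ≤ ∫ r in Set.Ioc p q, g r * u q := by
      refine setIntegral_mono_on (hgu_int.mono_set hsub)
        ((hgint.mono_set hsub).mul_const (u q)) measurableSet_Ioc fun r hr => ?_
      exact mul_le_mul_of_nonneg_left
        (humono r (hsub hr) q ⟨le_trans hp hpq, hqt⟩ hr.2) (hg r)
    calc (∫ r in Set.Ioc p q, g r * u r) ≤ ∫ r in Set.Ioc p q, g r * u q := h1
      _ = (∫ r in Set.Ioc p q, g r) * u q := by rw [integral_mul_const]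
  -- splitting lemma
  have hsplit : ∀ p q : ℝ, 0 ≤ p → p ≤ q → ∀ f : ℝ → ℝ, IntegrableOn f (Set.Icc 0 q) →
      (∫ r in Set.Icc (0:ℝ) q, f r)
        = (∫ r in Set.Icc (0:ℝ) p, f r) + ∫ r in Set.Ioc p q, f r := by
    intro p q hp hpq f hf
    rw [← Set.Icc_union_Ioc_eq_Icc hp hpq]
    refine setIntegral_union ?_ measurableSet_Ioc ?_ ?_
    · exact Set.disjoint_left.2 fun x hx hx' => absurd hx.2 (not_le.mpr hx'.1)
    · exact hf.mono_set (by rw [← Set.Icc_union_Ioc_eq_Icc hp hpq]; exact Set.subset_union_left)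
    · exact hf.mono_set (by rw [← Set.Icc_union_Ioc_eq_Icc hp hpq]; exact Set.subset_union_right)
  have hFt0 : 0 ≤ Ft := hFnonneg t
  rcases eq_or_lt_of_le hFt0 with hFt | hFt
  · -- trivial case Ft = 0
    have h1 : (∫ r in Set.Icc (0:ℝ) t, g r * u r) ≤ (∫ r in Set.Icc (0:ℝ) t, g r) * u t := by
      calc (∫ r in Set.Icc (0:ℝ) t, g r * u r) ≤ ∫ r in Set.Icc (0:ℝ) t, g r * u t := by
            refine setIntegral_mono_on hgu_int (hgint.mul_const (u t))
              measurableSet_Icc fun r hr => ?_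
            exact mul_le_mul_of_nonneg_left (huB r hr) (hg r)
        _ = (∫ r in Set.Icc (0:ℝ) t, g r) * u t := by rw [integral_mul_const]
    have h2 : (∫ r in Set.Icc (0:ℝ) t, g r) = 0 := hFt.symm
    rw [h2, zero_mul] at h1
    have h3 : (Real.exp (∫ r in Set.Icc (0:ℝ) t, g r) - 1) * a = 0 := by
      rw [h2]; simp
    rw [h3]; exact h1
  · -- main case 0 < Ft
    have key : ∀ N : ℕ, Ft < N →
        (∫ r in Set.Icc (0:ℝ) t, g r * u r) ≤ (((1 - Ft/N)⁻¹)^N - 1) * a := by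
      intro N hN
      have hNpos : 0 < (N:ℝ) := lt_trans hFt hN
      set c : ℝ := Ft / N with hc
      have hc0 : 0 < c := div_pos hFt hNpos
      have hc1 : c < 1 := (div_lt_one hNpos).2 hN
      set d : ℝ := (1 - c)⁻¹ with hd
      have hd0 : 0 < d := inv_pos.2 (by linarith)
      have hne : (1:ℝ) - c ≠ 0 := by linarith
      have h1cd : (1 - c) * d = 1 := mul_inv_cancel₀ hne
      have hcd : 1 + c * d = d := by linear_combination (-1:ℝ) * h1cd
      have hNc : (N:ℝ) * c = Ft := by
        rw [hc]; field_simp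
      -- partition via intermediate value theorem
      have hex : ∀ i : ℕ, ∃ x ∈ Set.Icc (0:ℝ) t, F x = min ((i:ℝ) * c) Ft := by
        intro i
        have : min ((i:ℝ) * c) Ft ∈ Set.Icc (F 0) (F t) := by
          constructor
          · rw [hF0]; exact le_min (mul_nonneg (Nat.cast_nonneg i) hc0.le) hFt0
          · exact min_le_right _ _
        obtain ⟨x, hx, hFx⟩ := intermediate_value_Icc ht hFcont this
        exact ⟨x, hx, hFx⟩
      choose s hsmem hsF using hex
      have hminval : ∀ i : ℕ, i ≤ N → F (s i) = (i:ℝ) * c := by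
        intro i hi
        rw [hsF i, min_eq_left]
        rw [← hNc]
        exact mul_le_mul_of_nonneg_right (Nat.cast_le.mpr hi) hc0.le
      have hsmono : ∀ i : ℕ, i + 1 ≤ N → s i ≤ s (i+1) := by
        intro i hi
        by_contra h
        push_neg at h
        have h1 : F (s (i+1)) ≤ F (s i) :=
          hFmono _ _ (hsmem (i+1)).1 h.le (hsmem i).2
        rw [hminval i (by omega), hminval (i+1) hi] at h1
        have : ((i:ℝ)+1) * c ≤ (i:ℝ) * c := by push_cast at h1 ⊢; linarith
        nlinarith
      set W : ℕ → ℝ := fun i => ∫ r in Set.Icc (0:ℝ) (s i), g r * u r with hW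
      have hWnonneg : ∀ i, 0 ≤ W i := fun i =>
        setIntegral_nonneg measurableSet_Icc fun r _ => mul_nonneg (hg r) (hu r)
      -- induction
      have hind : ∀ i : ℕ, i ≤ N → W i ≤ (d^i - 1) * a := by
        intro i
        induction i with
        | zero =>
          intro _
          have h1 : W 0 ≤ (∫ r in Set.Icc (0:ℝ) (s 0), g r) * u t := by
            have hsub : Set.Icc (0:ℝ) (s 0) ⊆ Set.Icc (0:ℝ) t :=
              Set.Icc_subset_Icc le_rfl (hsmem 0).2
            calc W 0 ≤ ∫ r in Set.Icc (0:ℝ) (s 0), g r * u t := by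
                  refine setIntegral_mono_on (hgu_int.mono_set hsub)
                    ((hgint.mono_set hsub).mul_const (u t)) measurableSet_Icc fun r hr => ?_
                  exact mul_le_mul_of_nonneg_left (huB r (hsub hr)) (hg r)
              _ = (∫ r in Set.Icc (0:ℝ) (s 0), g r) * u t := by rw [integral_mul_const]
          have h2 : F (s 0) = 0 := by
            have := hminval 0 (Nat.zero_le N); simpa using this
          rw [show (∫ r in Set.Icc (0:ℝ) (s 0), g r) = F (s 0) from rfl, h2, zero_mul] at h1
          simpa using h1
        | succ i ih =>
          intro hiN
          have hi : i ≤ N := by omega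
          have ihW : W i ≤ (d^i - 1) * a := ih hi
          have hστ : s i ≤ s (i+1) := hsmono i hiN
          have hσ0 : 0 ≤ s i := (hsmem i).1
          have hτt : s (i+1) ≤ t := (hsmem (i+1)).2
          have hτmem : s (i+1) ∈ Set.Icc (0:ℝ) t := hsmem (i+1)
          have hgint' : IntegrableOn g (Set.Icc 0 (s (i+1))) :=
            hgint.mono_set (Set.Icc_subset_Icc le_rfl hτt)
          have hgu_int' : IntegrableOn (fun r => g r * u r) (Set.Icc 0 (s (i+1))) :=
            hgu_int.mono_set (Set.Icc_subset_Icc le_rfl hτt)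
          have hsplitg := hsplit (s i) (s (i+1)) hσ0 hστ g hgint'
          have hsplitgu := hsplit (s i) (s (i+1)) hσ0 hστ (fun r => g r * u r) hgu_int'
          have hioc_g : (∫ r in Set.Ioc (s i) (s (i+1)), g r) = c := by
            have h1 : F (s (i+1)) = F (s i) + ∫ r in Set.Ioc (s i) (s (i+1)), g r := hsplitg
            rw [hminval i hi, hminval (i+1) hiN] at h1
            push_cast at h1
            linarith
          have hioc_gu : (∫ r in Set.Ioc (s i) (s (i+1)), g r * u r) ≤ c * u (s (i+1)) := by
            have := hbound (s i) (s (i+1)) hσ0 hστ hτt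
            rwa [hioc_g] at this
          have hWrec : W (i+1) = W i + ∫ r in Set.Ioc (s i) (s (i+1)), g r * u r := hsplitgu
          have huτ : u (s (i+1)) ≤ a + W i + c * u (s (i+1)) := by
            have h1 := hIneq (s (i+1)) hτmem
            rw [hsplitgu] at h1
            have : W i + (∫ r in Set.Ioc (s i) (s (i+1)), g r * u r)
                ≤ W i + c * u (s (i+1)) := by linarith [hioc_gu]
            linarith
          have huτ2 : u (s (i+1)) ≤ (a + W i) * d := by
            have h1 : (1 - c) * u (s (i+1)) ≤ a + W i := by linarith
            have h2 : (1 - c) * u (s (i+1)) * d ≤ (a + W i) * d :=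
              mul_le_mul_of_nonneg_right h1 hd0.le
            nlinarith [hu (s (i+1)), h1cd]
          have hstep : W (i+1) ≤ W i + c * ((a + W i) * d) := by
            rw [hWrec]
            have : (∫ r in Set.Ioc (s i) (s (i+1)), g r * u r) ≤ c * ((a + W i) * d) :=
              le_trans hioc_gu (mul_le_mul_of_nonneg_left huτ2 hc0.le)
            linarith
          have hcd' : d - c * d = 1 := by linarith
          calc W (i+1) ≤ W i + c * ((a + W i) * d) := hstep
            _ = W i * (1 + c*d) + c*d*a := by ring
            _ = W i * d + c*d*a := by rw [hcd]
            _ ≤ (d^i - 1)*a*d + c*d*a :=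
                add_le_add (mul_le_mul_of_nonneg_right ihW hd0.le) le_rfl
            _ = (d^(i+1) - 1)*a := by rw [pow_succ]; linear_combination (-a) * hcd'
      -- conclude for this N
      have hWN := hind N le_rfl
      have hsNt : s N ≤ t := (hsmem N).2
      have hsN0 : 0 ≤ s N := (hsmem N).1
      have hsplitg := hsplit (s N) t hsN0 hsNt g hgint
      have hsplitgu := hsplit (s N) t hsN0 hsNt (fun r => g r * u r) hgu_int
      have hFsN : F (s N) = Ft := by rw [hminval N le_rfl, hNc]
      have htail_g : (∫ r in Set.Ioc (s N) t, g r) = 0 := by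
        have h1 : F t = F (s N) + ∫ r in Set.Ioc (s N) t, g r := hsplitg
        rw [hFsN] at h1
        have : Ft = F t := rfl
        linarith [this ▸ h1]
      have htail_gu : (∫ r in Set.Ioc (s N) t, g r * u r) ≤ 0 := by
        have := hbound (s N) t hsN0 hsNt le_rfl
        rw [htail_g, zero_mul] at this
        exact this
      calc (∫ r in Set.Icc (0:ℝ) t, g r * u r)
          = W N + ∫ r in Set.Ioc (s N) t, g r * u r := hsplitgu
        _ ≤ (d^N - 1) * a + 0 := add_le_add hWN htail_gu
        _ = (((1 - Ft/N)⁻¹)^N - 1) * a := by rw [add_zero]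
    -- take the limit N → ∞
    have hlim : Tendsto (fun N : ℕ => (((1 - Ft/N)⁻¹)^N - 1) * a) atTop
        (nhds ((Real.exp Ft - 1) * a)) := by
      have h1 : Tendsto (fun N : ℕ => (1 + (-Ft) / N) ^ N) atTop
          (nhds (Real.exp (-Ft))) := Real.tendsto_one_add_div_pow_exp (-Ft)
      have h2 : Tendsto (fun N : ℕ => ((1 + (-Ft) / N) ^ N)⁻¹) atTop
          (nhds (Real.exp (-Ft))⁻¹) := h1.inv₀ (Real.exp_ne_zero _)
      have h3 : (Real.exp (-Ft))⁻¹ = Real.exp Ft := by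
        rw [Real.exp_neg, inv_inv]
      rw [h3] at h2
      have h4 : (fun N : ℕ => ((1 + (-Ft) / N) ^ N)⁻¹)
          = fun N : ℕ => ((1 - Ft/N)⁻¹)^N := by
        funext N
        rw [← inv_pow]
        congr 2
        ring
      rw [h4] at h2
      exact (h2.sub tendsto_const_nhds).mul tendsto_const_nhds
    refine ge_of_tendsto hlim ?_
    rw [eventually_atTop]
    refine ⟨⌈Ft⌉₊ + 1, fun N hN => key N ?_⟩
    calc Ft ≤ (⌈Ft⌉₊ : ℝ) := Nat.le_ceil Ft
      _ < (⌈Ft⌉₊ : ℝ) + 1 := by linarith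
      _ ≤ (N : ℝ) := by exact_mod_cast hN


/-- Gronwall-type lemma in expectation (Lemma 3.7 of the paper): under the pathwise
integral inequality `X(t) + α Y(t) ≤ Z + ∫₀ᵗ φ X + I(t)` and the moment bound
`E[I(t)] ≤ β E[X(t)] + γ E[Y(t)] + C̃` with `β ≤ 1/(2(1+Ce^C))` and
`γ ≤ α/(2(1+Ce^C))`, one has `E[X(t) + α Y(t)] ≤ 2(1+Ce^C)(E[Z] + C̃)`. -/
theorem gronwall_expectation {Ω : Type*} [MeasureSpace Ω]
    [IsProbabilityMeasure (volume : Measure Ω)]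
    (T C : ℝ) (hT : 0 < T) (hC : 0 ≤ C)
    (X Y I : ℝ → Ω → ℝ) (φ : ℝ → Ω → ℝ) (Z : Ω → ℝ)
    (α β γ Ctilde : ℝ)
    (hα : 0 < α)
    (hβ : 0 < β) (hβle : β ≤ 1 / (2 * (1 + C * Real.exp C)))
    (hγ : 0 < γ) (hγle : γ ≤ α / (2 * (1 + C * Real.exp C)))
    (hCt : 0 < Ctilde)
    (hXmeas : Measurable (fun p : ℝ × Ω => X p.1 p.2))
    (hYmeas : Measurable (fun p : ℝ × Ω => Y p.1 p.2))
    (hImeas : Measurable (fun p : ℝ × Ω => I p.1 p.2))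
    (hφmeas : Measurable (fun p : ℝ × Ω => φ p.1 p.2))
    (hXpos : ∀ t ω, 0 ≤ X t ω) (hYpos : ∀ t ω, 0 ≤ Y t ω)
    (hIpos : ∀ t ω, 0 ≤ I t ω) (hφpos : ∀ t ω, 0 ≤ φ t ω)
    (hZpos : ∀ ω, 0 ≤ Z ω) (hZint : Integrable Z)
    (hXint : ∀ t ∈ Set.Icc (0:ℝ) T, Integrable (X t))
    (hYint : ∀ t ∈ Set.Icc (0:ℝ) T, Integrable (Y t))
    (hIint : ∀ t ∈ Set.Icc (0:ℝ) T, Integrable (I t))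
    (hXmono : ∀ᵐ ω, ∀ s ∈ Set.Icc (0:ℝ) T, ∀ t ∈ Set.Icc (0:ℝ) T,
      s ≤ t → X s ω ≤ X t ω)
    (hYmono : ∀ᵐ ω, ∀ s ∈ Set.Icc (0:ℝ) T, ∀ t ∈ Set.Icc (0:ℝ) T,
      s ≤ t → Y s ω ≤ Y t ω)
    (hImono : ∀ᵐ ω, ∀ s ∈ Set.Icc (0:ℝ) T, ∀ t ∈ Set.Icc (0:ℝ) T,
      s ≤ t → I s ω ≤ I t ω)
    (hφintC : ∀ᵐ ω, IntegrableOn (fun s => φ s ω) (Set.Icc 0 T) ∧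
      (∫ s in Set.Icc (0:ℝ) T, φ s ω) ≤ C)
    (hineq : ∀ᵐ ω, ∀ t ∈ Set.Icc (0:ℝ) T,
      X t ω + α * Y t ω ≤ Z ω + (∫ r in Set.Icc (0:ℝ) t, φ r ω * X r ω) + I t ω)
    (hImom : ∀ t ∈ Set.Icc (0:ℝ) T,
      (∫ ω, I t ω) ≤ β * (∫ ω, X t ω) + γ * (∫ ω, Y t ω) + Ctilde)
    (hXbdd : ∃ B : ℝ, ∀ t ∈ Set.Icc (0:ℝ) T, ∀ᵐ ω, X t ω ≤ B) :
    ∀ t ∈ Set.Icc (0:ℝ) T,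
      (∫ ω, (X t ω + α * Y t ω)) ≤ 2 * (1 + C * Real.exp C) * ((∫ ω, Z ω) + Ctilde) := by
  intro t ht
  set K : ℝ := 1 + C * Real.exp C with hK
  have hKpos : 0 < K := by
    have := Real.exp_pos C; nlinarith
  -- pathwise bound, almost everywhere
  have hae : ∀ᵐ ω, X t ω + α * Y t ω ≤ K * (Z ω + I t ω) := by
    filter_upwards [hXmono, hImono, hφintC, hineq] with ω hXm hIm hφi hIn
    obtain ⟨hφint, hφC⟩ := hφi
    have hsecφ : Measurable fun r => φ r ω := hφmeas.comp measurable_prodMk_right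
    have hsecX : Measurable fun r => X r ω := hXmeas.comp measurable_prodMk_right
    have hgint_t : IntegrableOn (fun r => φ r ω) (Set.Icc 0 t) :=
      hφint.mono_set (Set.Icc_subset_Icc le_rfl ht.2)
    have humono' : ∀ s ∈ Set.Icc (0:ℝ) t, ∀ r ∈ Set.Icc (0:ℝ) t, s ≤ r → X s ω ≤ X r ω := by
      intro s hs r hr hsr
      exact hXm s ⟨hs.1, hs.2.trans ht.2⟩ r ⟨hr.1, hr.2.trans ht.2⟩ hsr
    have hIneq' : ∀ s ∈ Set.Icc (0:ℝ) t,
        X s ω ≤ (Z ω + I t ω) + ∫ r in Set.Icc (0:ℝ) s, φ r ω * X r ω := by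
      intro s hs
      have hsT : s ∈ Set.Icc (0:ℝ) T := ⟨hs.1, hs.2.trans ht.2⟩
      have h1 := hIn s hsT
      have h2 := hIm s hsT t ht hs.2
      nlinarith [mul_nonneg hα.le (hYpos s ω)]
    have hcore := gronwall_core (fun r => φ r ω) (fun r => X r ω) t (Z ω + I t ω)
      ht.1 (fun r => hφpos r ω) (fun r => hXpos r ω) hsecφ hsecX hgint_t humono'
      (add_nonneg (hZpos ω) (hIpos t ω)) hIneq'
    have hFtC : (∫ r in Set.Icc (0:ℝ) t, φ r ω) ≤ C := by
      refine le_trans (setIntegral_mono_set hφint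
        (Filter.Eventually.of_forall fun r => hφpos r ω)
        (Set.Icc_subset_Icc le_rfl ht.2).eventuallyLE) hφC
    have hECle : Real.exp (∫ r in Set.Icc (0:ℝ) t, φ r ω) - 1 ≤ C * Real.exp C := by
      have h1 : Real.exp (∫ r in Set.Icc (0:ℝ) t, φ r ω) ≤ Real.exp C :=
        Real.exp_le_exp.2 hFtC
      have ha := Real.add_one_le_exp (-C)
      have hb : Real.exp (-C) * Real.exp C = 1 := by
        rw [← Real.exp_add]; simp
      nlinarith [Real.exp_pos C, mul_le_mul_of_nonneg_right ha (Real.exp_pos C).le]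
    have hZI : 0 ≤ Z ω + I t ω := add_nonneg (hZpos ω) (hIpos t ω)
    have hφX : (∫ r in Set.Icc (0:ℝ) t, φ r ω * X r ω) ≤ C * Real.exp C * (Z ω + I t ω) :=
      le_trans hcore (mul_le_mul_of_nonneg_right hECle hZI)
    have hmain := hIn t ht
    rw [hK]
    nlinarith [mul_nonneg hα.le (hYpos t ω)]
  -- expectation step
  have hXi := hXint t ht
  have hYi := hYint t ht
  have hIi := hIint t ht
  have hint1 : Integrable (fun ω => X t ω + α * Y t ω) := hXi.add (hYi.const_mul α)
  have hint2 : Integrable (fun ω => K * (Z ω + I t ω)) := (hZint.add hIi).const_mul K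
  have h1 : (∫ ω, (X t ω + α * Y t ω)) ≤ ∫ ω, K * (Z ω + I t ω) :=
    integral_mono_ae hint1 hint2 hae
  have h2 : (∫ ω, K * (Z ω + I t ω)) = K * ((∫ ω, Z ω) + ∫ ω, I t ω) := by
    rw [integral_const_mul, integral_add hZint hIi]
  have h3 : (∫ ω, (X t ω + α * Y t ω)) = (∫ ω, X t ω) + α * ∫ ω, Y t ω := by
    rw [integral_add hXi (hYi.const_mul α), integral_const_mul]
  have hImom' := hImom t ht
  have hEX : 0 ≤ ∫ ω, X t ω := integral_nonneg fun ω => hXpos t ω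
  have hEY : 0 ≤ ∫ ω, Y t ω := integral_nonneg fun ω => hYpos t ω
  have hβ2 : β * (2 * K) ≤ 1 := by
    have := (le_div_iff₀ (by positivity : (0:ℝ) < 2 * K)).1 hβle
    exact this
  have hγ2 : γ * (2 * K) ≤ α := by
    exact (le_div_iff₀ (by positivity : (0:ℝ) < 2 * K)).1 hγle
  rw [h3] at h1 ⊢
  rw [h2] at h1
  nlinarith [mul_le_mul_of_nonneg_right hβ2 hEX, mul_le_mul_of_nonneg_right hγ2 hEY,
    mul_le_mul_of_nonneg_left hImom' hKpos.le]
end
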